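/- arXiv:1201.4895 — 4 statements merged into one kernel-verified Lean document; each statement's English description precedes it below -/
import Mathlib

section
/- Let F be a field, d a positive natural number, C a p × d matrix over F and A a d × d matrix over F. Then the observability matrix O(C,A) has rank d if and only if the only vector x ∈ F^d satisfying C A^k x = 0 for every natural number k is x = 0 (equivalently, the linear map sending x to the sequence (C A^k x)_{k ∈ ℕ} is injective). -/
open Matrix

/-- The observability matrix `O(C, A)`: the `(p·d) × d` block matrix obtained by stacking
`C, C*A, C*A^2, …, C*A^(d-1)` vertically. Row `(k, i)` is row `i` of `C * A^k`. -/
def obsMat {F : Type*} [Field F] {p d : ℕ} (C : Matrix (Fin p) (Fin d) F)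
    (A : Matrix (Fin d) (Fin d) F) : Matrix (Fin d × Fin p) (Fin d) F :=
  Matrix.of fun ki j => (C * A ^ (ki.1 : ℕ)) ki.2 j

namespace Matrix

theorem rank_eq_card_width_iff {K m n : Type*} [Field K] [Fintype n] (M : Matrix m n K) :
    M.rank = Fintype.card n ↔ ∀ v, M *ᵥ v = 0 → v = 0 := by
  have h := LinearMap.finrank_range_add_finrank_ker M.mulVecLin
  rw [Module.finrank_fintype_fun_eq_card] at h
  rw [← ker_mulVecLin_eq_bot_iff, ← Submodule.finrank_eq_zero, rank]
  omega

/-- Cayley–Hamilton: `A ^ k = q(A)` with `q = X ^ k %ₘ A.charpoly` of degree `< card n`. -/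
theorem mul_pow_mulVec_eq_zero_of_forall_lt_card {R m n : Type*} [CommRing R] [Nontrivial R]
    [Fintype n] [DecidableEq n] (C : Matrix m n R) (A : Matrix n n R) (x : n → R)
    (h : ∀ i < Fintype.card n, (C * A ^ i) *ᵥ x = 0) (k : ℕ) : (C * A ^ k) *ᵥ x = 0 := by
  have hq : (Polynomial.X ^ k %ₘ A.charpoly).degree < Fintype.card n :=
    A.charpoly_degree_eq_dim ▸ Polynomial.degree_modByMonic_lt _ A.charpoly_monic
  rw [pow_eq_aeval_mod_charpoly, Polynomial.aeval_eq_sum_range, Matrix.mul_sum, sum_mulVec]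
  refine Finset.sum_eq_zero fun i _ => ?_
  rw [Matrix.mul_smul, smul_mulVec]
  rcases lt_or_ge i (Fintype.card n) with hi | hi
  · rw [h i hi, smul_zero]
  · rw [Polynomial.coeff_eq_zero_of_degree_lt (hq.trans_le (by exact_mod_cast hi)), zero_smul]

end Matrix

theorem obsMat_mulVec_apply {F : Type*} [Field F] {p d : ℕ} (C : Matrix (Fin p) (Fin d) F)
    (A : Matrix (Fin d) (Fin d) F) (x : Fin d → F) (ki : Fin d × Fin p) :
    (obsMat C A *ᵥ x) ki = ((C * A ^ (ki.1 : ℕ)) *ᵥ x) ki.2 :=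
  rfl

theorem obsMat_mulVec_eq_zero_iff {F : Type*} [Field F] {p d : ℕ} (C : Matrix (Fin p) (Fin d) F)
    (A : Matrix (Fin d) (Fin d) F) (x : Fin d → F) :
    obsMat C A *ᵥ x = 0 ↔ ∀ k : ℕ, (C * A ^ k) *ᵥ x = 0 := by
  constructor
  · intro h
    refine mul_pow_mulVec_eq_zero_of_forall_lt_card C A x fun i hi => funext fun j => ?_
    simpa [obsMat_mulVec_apply] using congrFun h (⟨i, by simpa using hi⟩, j)
  · intro h
    funext ki
    rw [obsMat_mulVec_apply, h, Pi.zero_apply, Pi.zero_apply]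

theorem stmt0_general {F : Type*} [Field F] {p d : ℕ}
    (C : Matrix (Fin p) (Fin d) F) (A : Matrix (Fin d) (Fin d) F) :
    (obsMat C A).rank = d ↔
      ∀ x : Fin d → F, (∀ k : ℕ, (C * A ^ k).mulVec x = 0) → x = 0 := by
  simpa only [Fintype.card_fin, obsMat_mulVec_eq_zero_iff] using
    (obsMat C A).rank_eq_card_width_iff

theorem stmt0 {F : Type*} [Field F] {p d : ℕ} (hd : 0 < d)
    (C : Matrix (Fin p) (Fin d) F) (A : Matrix (Fin d) (Fin d) F) :
    (obsMat C A).rank = d ↔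
      ∀ x : Fin d → F, (∀ k : ℕ, (C * A ^ k).mulVec x = 0) → x = 0 :=
  stmt0_general C A
end

section
/- Let C be an N × d real matrix with rank(C) = d, let m ≥ d, and let γ be the product measure on the space of m × N real matrices (functions Fin m → Fin N → ℝ) whose factors are each the standard Gaussian measure on ℝ (gaussianReal 0 1), so that the entries of a random matrix Φ are i.i.d. standard Gaussians. Then for γ-almost every Φ, rank(Φ C) = d. -/
/-!
`rank (Φ C) = d` iff the Gram determinant `det ((Φ C)ᵀ (Φ C))` is nonzero, and this determinant
is a polynomial in the entries of `Φ`. It is not the zero polynomial: for `Φ₀ = E Cᵀ`, with `E`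
the `m × d` matrix of the first `d` columns of the identity, `Φ₀ C = E (Cᵀ C)` has rank `d`.
The zero set of a nonzero polynomial is null for any product of measures absolutely continuous
w.r.t. Lebesgue measure (Fubini and induction on the number of variables: in the first variable
the polynomial has finitely many roots, except on the null set where its leading coefficient, a
polynomial in the remaining variables, vanishes).
-/

open MeasureTheory ProbabilityTheory Matrix

namespace Matrix

section Field

variable {m n d K : Type*} [Fintype m] [Fintype n] [Fintype d] [DecidableEq d] [Field K]

theorem det_ne_zero_of_rank_eq_card {A : Matrix d d K} (h : A.rank = Fintype.card d) :
    A.det ≠ 0 := by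
  have hrange : LinearMap.range A.mulVecLin = ⊤ :=
    Submodule.eq_top_of_finrank_eq (by simpa [rank] using h)
  have hunit : IsUnit A := mulVec_surjective_iff_isUnit.mp (LinearMap.range_eq_top.mp hrange)
  exact ((isUnit_iff_isUnit_det A).mp hunit).ne_zero

variable [LinearOrder K] [IsStrictOrderedRing K]

theorem rank_eq_card_iff_det_transpose_mul_self_ne_zero (A : Matrix m d K) :
    A.rank = Fintype.card d ↔ (Aᵀ * A).det ≠ 0 := by
  rw [← rank_transpose_mul_self]
  exact ⟨det_ne_zero_of_rank_eq_card, rank_of_det_ne_zero⟩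

theorem rank_one_submatrix_embedding [DecidableEq m] (e : d ↪ m) :
    ((1 : Matrix m m K).submatrix id e).rank = Fintype.card d := by
  have : ((1 : Matrix m m K).submatrix id e)ᵀ * (1 : Matrix m m K).submatrix id e = 1 := by
    rw [transpose_submatrix, ← submatrix_mul _ _ _ _ _ Function.bijective_id, transpose_one,
      Matrix.one_mul, submatrix_one_embedding]
  rw [← rank_transpose_mul_self, this, rank_one]

theorem exists_rank_mul_eq_card [DecidableEq m] {C : Matrix n d K}
    (hC : C.rank = Fintype.card d) (e : d ↪ m) :
    ∃ Φ : Matrix m n K, (Φ * C).rank = Fintype.card d := by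
  have hgram : IsUnit (Cᵀ * C).det :=
    isUnit_iff_ne_zero.mpr ((rank_eq_card_iff_det_transpose_mul_self_ne_zero C).mp hC)
  refine ⟨(1 : Matrix m m K).submatrix id e * Cᵀ, ?_⟩
  rw [Matrix.mul_assoc, rank_mul_eq_left_of_isUnit_det _ _ hgram, rank_one_submatrix_embedding]

end Field

section CommRing

variable {m n d R : Type*} [Fintype m] [Fintype n] [Fintype d] [DecidableEq d] [CommRing R]

variable (m) in
noncomputable def gramDetPoly (C : Matrix n d R) : MvPolynomial (m × n) R :=
  let A := mvPolynomialX m n R * C.map (MvPolynomial.C (σ := m × n))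
  (Aᵀ * A).det

theorem eval_gramDetPoly (C : Matrix n d R) (Φ : Matrix m n R) :
    MvPolynomial.eval (fun p => Φ p.1 p.2) (gramDetPoly m C) = ((Φ * C)ᵀ * (Φ * C)).det := by
  have hΦ : (mvPolynomialX m n R).map (MvPolynomial.eval fun p => Φ p.1 p.2) = Φ :=
    mvPolynomialX_map_eval₂ _ Φ
  have hC : (C.map MvPolynomial.C).map (MvPolynomial.eval fun p : m × n => Φ p.1 p.2) = C := by
    ext; simp
  rw [gramDetPoly, RingHom.map_det, RingHom.mapMatrix_apply, Matrix.map_mul, transpose_map,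
    Matrix.map_mul, hΦ, hC]

end CommRing

end Matrix

theorem Polynomial.ae_eval_ne_zero {μ : Measure ℝ} (hμ : μ ≪ volume) {q : Polynomial ℝ}
    (hq : q ≠ 0) : ∀ᵐ a ∂μ, q.eval a ≠ 0 := by
  rw [ae_iff]
  push Not
  exact hμ ((Polynomial.finite_setOfPred_isRoot hq).countable.measure_zero volume)

namespace MvPolynomial

theorem ae_eval_ne_zero_fin : ∀ {n : ℕ} (μ : Fin n → Measure ℝ) [∀ i, SigmaFinite (μ i)],
    (∀ i, μ i ≪ volume) → ∀ {p : MvPolynomial (Fin n) ℝ}, p ≠ 0 →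
    ∀ᵐ x ∂Measure.pi μ, eval x p ≠ 0
  | 0, _, _, _, p, hp => .of_forall fun x => by
      rw [eq_C_of_isEmpty p] at hp ⊢
      simpa using hp
  | n + 1, μ, _, hμ, p, hp => by
    set f := finSuccEquiv ℝ n p
    have hf : f ≠ 0 := by simpa [f] using hp
    have hlead : ∀ᵐ y ∂Measure.pi fun j => μ ((0 : Fin (n + 1)).succAbove j),
        eval y f.leadingCoeff ≠ 0 :=
      ae_eval_ne_zero_fin _ (fun j => hμ _) (Polynomial.leadingCoeff_ne_zero.mpr hf)
    have hslices : ∀ᵐ y ∂Measure.pi fun j => μ ((0 : Fin (n + 1)).succAbove j),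
        ∀ᵐ a ∂μ 0, eval (Fin.cons a y) p ≠ 0 := by
      filter_upwards [hlead] with y hy
      simp_rw [eval_eq_eval_mv_eval']
      refine Polynomial.ae_eval_ne_zero (hμ 0) (Polynomial.leadingCoeff_ne_zero.mp ?_)
      rwa [Polynomial.leadingCoeff_map_of_leadingCoeff_ne_zero _ hy]
    have hmeas : MeasurableSet {z : ℝ × (Fin n → ℝ) | eval (Fin.cons z.1 z.2) p ≠ 0} :=
      (isOpen_ne_fun ((continuous_eval p).comp (by fun_prop)) continuous_const).measurableSet
    have hprod := (Measure.ae_prod_iff_ae_ae hmeas).mpr ((Measure.ae_ae_comm hmeas).mpr hslices)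
    filter_upwards [(measurePreserving_piFinSuccAbove μ 0).quasiMeasurePreserving.ae hprod]
      with x hx
    simpa using hx

theorem ae_eval_ne_zero {ι : Type*} [Fintype ι] (μ : ι → Measure ℝ) [∀ i, SigmaFinite (μ i)]
    (hμ : ∀ i, μ i ≪ volume) {p : MvPolynomial ι ℝ} (hp : p ≠ 0) :
    ∀ᵐ x ∂Measure.pi μ, eval x p ≠ 0 := by
  set e := (Fintype.equivFin ι).symm
  have hp' : rename e.symm p ≠ 0 := (rename_injective _ e.symm.injective).ne_iff.mpr hp
  filter_upwards [(measurePreserving_piCongrLeft μ e).symm.quasiMeasurePreserving.ae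
    (ae_eval_ne_zero_fin _ (fun k => hμ (e k)) hp')] with x hx
  have hsymm : ∀ k, (MeasurableEquiv.piCongrLeft (fun _ => ℝ) e).symm x k = x (e k) :=
    fun _ => rfl
  simpa [eval_rename, Function.comp_def, hsymm] using hx

end MvPolynomial

theorem MeasureTheory.measurePreserving_curry_symm {ι κ X : Type*} [Fintype ι] [Fintype κ]
    [MeasurableSpace X] (μ : ι → κ → Measure X) [∀ i j, SigmaFinite (μ i j)] :
    MeasurePreserving (MeasurableEquiv.curry ι κ X).symm
      (Measure.pi fun i => Measure.pi (μ i)) (Measure.pi fun p : ι × κ => μ p.1 p.2) := by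
  refine ⟨(MeasurableEquiv.curry ι κ X).symm.measurable, (Measure.pi_eq fun s hs => ?_).symm⟩
  have hbox : (MeasurableEquiv.curry ι κ X).symm ⁻¹' Set.univ.pi s =
      Set.univ.pi fun i => Set.univ.pi fun j => s (i, j) := by
    ext x
    simp [MeasurableEquiv.coe_curry_symm]
  rw [MeasurableEquiv.map_apply, hbox, Measure.pi_pi]
  simp_rw [Measure.pi_pi]
  rw [Fintype.prod_prod_type]


theorem stmt7 {m N d : ℕ} (C : Matrix (Fin N) (Fin d) ℝ) (hC : C.rank = d)
    (hm : d ≤ m) :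
    ∀ᵐ Φ ∂(Measure.pi fun _ : Fin m => Measure.pi fun _ : Fin N => gaussianReal 0 1),
      (Matrix.of Φ * C).rank = d := by
  have hgram (Φ : Matrix (Fin m) (Fin N) ℝ) :
      (Φ * C).rank = d ↔ MvPolynomial.eval (fun p => Φ p.1 p.2) (gramDetPoly (Fin m) C) ≠ 0 := by
    simpa [eval_gramDetPoly] using rank_eq_card_iff_det_transpose_mul_self_ne_zero (Φ * C)
  have hP : gramDetPoly (Fin m) C ≠ 0 := by
    obtain ⟨Φ₀, hΦ₀⟩ := exists_rank_mul_eq_card (by simpa using hC) (Fin.castLEEmb hm)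
    exact fun h => (hgram Φ₀).mp (by simpa using hΦ₀) (by rw [h, map_zero])
  have hflat := MvPolynomial.ae_eval_ne_zero _
    (fun _ => gaussianReal_absolutelyContinuous 0 one_ne_zero) hP
  filter_upwards [(measurePreserving_curry_symm _).quasiMeasurePreserving.ae hflat] with Φ hΦ
  exact (hgram (Matrix.of Φ)).mpr hΦ
end

section
/- Let F be a field, d a positive natural number, and B a d × d matrix over F that is diagonalizable as B = Q Λ Q⁻¹, where Q is an invertible d × d matrix and Λ is the diagonal matrix with diagonal entries λ_0, …, λ_{d−1}. For any vector c ∈ F^d, writing e = Q⁻¹ c, the Krylov matrix K(B, c) satisfies the factorization K(B, c) = Q · diag(e) · V(λ), where diag(e) is the diagonal matrix with diagonal entries e_0, …, e_{d−1} and V(λ) is the Vandermonde matrix with entries V(λ)_{i,j} = λ_i^j for 0 ≤ i, j ≤ d−1. -/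
/-!
Conjugation commutes with powers, so `K(Q A Q⁻¹, c) = Q · K(A, Q⁻¹ c)`; and for a diagonal
matrix the `j`-th column of `K(diag λ, e)` is `(λ_i^j e_i)_i`, i.e. `K(diag λ, e) = diag(e) V(λ)`.
-/

open Matrix

/-- The Krylov matrix `K(B, c) = [c | Bc | B²c | ⋯ | B^(d−1)c]`: the `d × d` matrix whose
`j`-th column is `B^j c`. -/
def krylov {F : Type*} [Field F] {d : ℕ} (B : Matrix (Fin d) (Fin d) F) (c : Fin d → F) :
    Matrix (Fin d) (Fin d) F :=
  Matrix.of fun i j => (B ^ (j : ℕ)).mulVec c i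

lemma Matrix.conj_pow_of_isUnit {n R : Type*} [Fintype n] [DecidableEq n] [CommRing R]
    {Q : Matrix n n R} (hQ : IsUnit Q) (A : Matrix n n R) (k : ℕ) :
    (Q * A * Q⁻¹) ^ k = Q * A ^ k * Q⁻¹ := by
  simpa [coe_units_inv] using Units.conj_pow hQ.unit A k

section Krylov

variable {F : Type*} [Field F] {d : ℕ}

lemma krylov_conj {Q : Matrix (Fin d) (Fin d) F} (hQ : IsUnit Q)
    (A : Matrix (Fin d) (Fin d) F) (c : Fin d → F) :
    krylov (Q * A * Q⁻¹) c = Q * krylov A (Q⁻¹ *ᵥ c) := by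
  ext i j
  rw [krylov, of_apply, conj_pow_of_isUnit hQ, ← mulVec_mulVec, ← mulVec_mulVec]
  simp [mul_apply, mulVec, dotProduct, krylov]

lemma krylov_diagonal (lam e : Fin d → F) :
    krylov (diagonal lam) e = diagonal e * vandermonde lam := by
  ext i j
  simp [krylov, diagonal_pow, mulVec_diagonal, mul_comm]

end Krylov

theorem stmt8_general {F : Type*} [Field F] {d : ℕ}
    (B Q : Matrix (Fin d) (Fin d) F) (lam : Fin d → F) (hQ : IsUnit Q)
    (hB : B = Q * Matrix.diagonal lam * Q⁻¹) (c : Fin d → F) (e : Fin d → F)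
    (he : e = Q⁻¹.mulVec c) :
    krylov B c = Q * Matrix.diagonal e * Matrix.vandermonde lam := by
  rw [hB, krylov_conj hQ, ← he, krylov_diagonal, Matrix.mul_assoc]

theorem stmt8 {F : Type*} [Field F] {d : ℕ} (hd : 0 < d)
    (B Q : Matrix (Fin d) (Fin d) F) (lam : Fin d → F) (hQ : IsUnit Q)
    (hB : B = Q * Matrix.diagonal lam * Q⁻¹) (c : Fin d → F) (e : Fin d → F)
    (he : e = Q⁻¹.mulVec c) :
    krylov B c = Q * Matrix.diagonal e * Matrix.vandermonde lam :=
  stmt8_general B Q lam hQ hB c e he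
end

section
/- Let d ≤ N be positive natural numbers, let A be a d × d real matrix whose transpose is diagonalizable as Aᵀ = Q Λ Q⁻¹ with Q an invertible real d × d matrix and Λ the diagonal matrix with pairwise distinct diagonal entries λ_0, …, λ_{d−1}, and let C be an N × d real matrix with rank(C) = d. Let γ_N be the product measure on ℝ^N (functions Fin N → ℝ) of N copies of the standard Gaussian measure on ℝ (gaussianReal 0 1). Then for γ_N-almost every φ ∈ ℝ^N, the d × d observability matrix O(φᵀ C, A), whose k-th row (k = 0, …, d−1) is the row vector φᵀ C A^k, is invertible. (This is the paper's Theorem stating that with one common measurement per frame the state sequence is observable.) -/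
/-!
The determinant of `O(φᵀ C, A)` is a polynomial in `φ`, and the zero set of a nonzero polynomial
is null for any product of atomless measures (induction on the number of variables: by Fubini,
for almost every choice of the last `n` coordinates the leading coefficient in the first one does
not vanish, leaving a nonzero polynomial in one variable). So it suffices to exhibit one `φ₀` with
`O(φ₀ᵀ C, A)` invertible. Since `rank C = d`, we can choose `φ₀ᵀ C = Q 𝟙`; then
`φ₀ᵀ C Aᵏ = Q Λᵏ 𝟙`, so `O(φ₀ᵀ C, A) = Vᵀ Qᵀ` with `V` the Vandermonde matrix of the distinct `λᵢ`.
-/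

open MeasureTheory ProbabilityTheory Matrix

theorem Polynomial.ae_eval_ne_zero_s11 {K : Type*} [Field K] [MeasurableSpace K] {μ : Measure K}
    [NullSingletonClass μ] {p : Polynomial K} (hp : p ≠ 0) : ∀ᵐ t ∂μ, p.eval t ≠ 0 :=
  measure_eq_zero_iff_ae_notMem.mp ((finite_setOfPred_isRoot hp).measure_zero μ)

theorem MvPolynomial.ae_eval_ne_zero_s11 {n : ℕ} (μ : Fin n → Measure ℝ) [∀ i, SigmaFinite (μ i)]
    [∀ i, NullSingletonClass (μ i)] {P : MvPolynomial (Fin n) ℝ} (hP : P ≠ 0) :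
    ∀ᵐ x ∂Measure.pi μ, eval x P ≠ 0 := by
  induction n with
  | zero =>
    refine .of_forall fun x => ?_
    rw [eq_C_of_isEmpty P, eval_C]
    contrapose! hP
    rw [eq_C_of_isEmpty P, hP, map_zero]
  | succ n ih =>
    set q := finSuccEquiv ℝ n P
    have hq : q ≠ 0 := EmbeddingLike.map_ne_zero_iff.mpr hP
    have hmeas : MeasurableSet {p : ℝ × (Fin n → ℝ) | eval (Fin.cons p.1 p.2) P ≠ 0} :=
      (measurableSet_singleton 0).compl.preimage <|
        ((continuous_eval P).comp <| continuous_fst.finCons continuous_snd).measurable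
    have hprod : ∀ᵐ p ∂(μ 0).prod (Measure.pi fun j => μ (Fin.succAbove 0 j)),
        eval (Fin.cons p.1 p.2) P ≠ 0 := by
      rw [Measure.ae_prod_iff_ae_ae hmeas,
        Measure.ae_ae_comm (p := fun t s => eval (Fin.cons t s) P ≠ 0) hmeas]
      filter_upwards [ih _ (Polynomial.leadingCoeff_ne_zero.mpr hq)] with s hs
      have hqs : q.map (eval s) ≠ 0 := fun h => hs <| by
        simpa [Polynomial.coeff_map] using congrArg (Polynomial.coeff · q.natDegree) h
      filter_upwards [Polynomial.ae_eval_ne_zero_s11 hqs] with t ht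
      rwa [eval_eq_eval_mv_eval']
    filter_upwards [(measurePreserving_piFinSuccAbove μ 0).quasiMeasurePreserving.ae hprod]
      with x hx
    simpa [Fin.cons_self_tail, Fin.tail] using hx

namespace Matrix

theorem ae_isUnit_of_vecMul {m : Type*} [Fintype m] [DecidableEq m] {N : ℕ}
    (μ : Fin N → Measure ℝ) [∀ i, SigmaFinite (μ i)] [∀ i, NullSingletonClass (μ i)]
    (B : m → Matrix (Fin N) m ℝ) (φ₀ : Fin N → ℝ) (h₀ : IsUnit (of fun k j => (φ₀ ᵥ* B k) j)) :
    ∀ᵐ φ ∂Measure.pi μ, IsUnit (of fun k j => (φ ᵥ* B k) j) := by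
  set P : MvPolynomial (Fin N) ℝ :=
    (of fun k j => (MvPolynomial.X ᵥ* (B k).map MvPolynomial.C) j).det
  have heval (φ : Fin N → ℝ) : MvPolynomial.eval φ P = (of fun k j => (φ ᵥ* B k) j).det := by
    rw [RingHom.map_det]
    congr 1
    ext k j
    simp [RingHom.map_vecMul, Matrix.map_map, Function.comp_def]
  have hP : P ≠ 0 := fun h => by
    simp [isUnit_iff_isUnit_det, ← heval, h] at h₀
  filter_upwards [MvPolynomial.ae_eval_ne_zero_s11 μ hP] with φ hφ
  rwa [isUnit_iff_isUnit_det, isUnit_iff_ne_zero, ← heval]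

theorem vecMul_surjective_of_rank_eq {m n K : Type*} [Fintype m] [Fintype n] [Field K]
    {C : Matrix m n K} (hC : C.rank = Fintype.card n) : Function.Surjective (· ᵥ* C) := by
  have hrange : LinearMap.range Cᵀ.mulVecLin = ⊤ := by
    apply Submodule.eq_top_of_finrank_eq
    rw [Module.finrank_fintype_fun_eq_card, ← hC, ← rank_transpose]
    rfl
  intro r
  obtain ⟨φ, hφ⟩ := LinearMap.range_eq_top.mp hrange r
  exact ⟨φ, by simpa [← mulVec_transpose] using hφ⟩

def observability {n : ℕ} {R : Type*} [Semiring R] (r : Fin n → R)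
    (A : Matrix (Fin n) (Fin n) R) : Matrix (Fin n) (Fin n) R :=
  of fun k j => (r ᵥ* A ^ (k : ℕ)) j

theorem observability_mulVec_one {n : ℕ} {R : Type*} [CommRing R] {A Q : Matrix (Fin n) (Fin n) R}
    {lam : Fin n → R} (hQ : IsUnit Q) (hA : Aᵀ = Q * diagonal lam * Q⁻¹) :
    observability (Q *ᵥ 1) A = (vandermonde lam)ᵀ * Qᵀ := by
  obtain ⟨u, rfl⟩ := hQ
  have hrow (k : ℕ) : ((u : Matrix (Fin n) (Fin n) R) *ᵥ 1) ᵥ* A ^ k =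
      (u : Matrix (Fin n) (Fin n) R) *ᵥ fun i => lam i ^ k := by
    rw [← mulVec_transpose, transpose_pow, hA, ← coe_units_inv, Units.conj_pow, mulVec_mulVec,
      Matrix.mul_assoc, Matrix.mul_assoc, Units.inv_mul, Matrix.mul_one, ← mulVec_mulVec,
      diagonal_pow]
    congr 1
    ext i
    simp [mulVec_diagonal]
  ext k j
  simp [observability, hrow, mul_apply, mulVec, dotProduct, vandermonde, mul_comm]

theorem isUnit_observability_mulVec_one {n : ℕ} {K : Type*} [Field K]
    {A Q : Matrix (Fin n) (Fin n) K} {lam : Fin n → K} (hQ : IsUnit Q) (hA : Aᵀ = Q * diagonal lam * Q⁻¹)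
    (hlam : Function.Injective lam) : IsUnit (observability (Q *ᵥ 1) A) := by
  rw [observability_mulVec_one hQ hA, isUnit_iff_isUnit_det, det_mul, det_transpose,
    det_transpose]
  exact (isUnit_iff_ne_zero.mpr (det_vandermonde_ne_zero_iff.mpr hlam)).mul
    ((isUnit_iff_isUnit_det Q).mp hQ)

end Matrix

theorem stmt11_general {d N : ℕ}
    (A Q : Matrix (Fin d) (Fin d) ℝ) (lam : Fin d → ℝ) (hQ : IsUnit Q)
    (hA : Aᵀ = Q * Matrix.diagonal lam * Q⁻¹) (hlam : Function.Injective lam)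
    (C : Matrix (Fin N) (Fin d) ℝ) (hC : C.rank = d) :
    ∀ᵐ φ ∂(Measure.pi fun _ : Fin N => gaussianReal 0 1),
      IsUnit (Matrix.of fun (k j : Fin d) => Matrix.vecMul φ (C * A ^ (k : ℕ)) j) := by
  have := nullSingletonClass_gaussianReal (μ := 0) one_ne_zero
  obtain ⟨φ₀, hφ₀⟩ := vecMul_surjective_of_rank_eq (hC.trans (Fintype.card_fin d).symm) (Q *ᵥ 1)
  refine ae_isUnit_of_vecMul _ (fun k : Fin d => C * A ^ (k : ℕ)) φ₀ ?_
  simpa [observability, ← vecMul_vecMul, hφ₀] using isUnit_observability_mulVec_one hQ hA hlam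

theorem stmt11 {d N : ℕ} (hd : 0 < d) (hdN : d ≤ N)
    (A Q : Matrix (Fin d) (Fin d) ℝ) (lam : Fin d → ℝ) (hQ : IsUnit Q)
    (hA : Aᵀ = Q * Matrix.diagonal lam * Q⁻¹) (hlam : Function.Injective lam)
    (C : Matrix (Fin N) (Fin d) ℝ) (hC : C.rank = d) :
    ∀ᵐ φ ∂(Measure.pi fun _ : Fin N => gaussianReal 0 1),
      IsUnit (Matrix.of fun (k j : Fin d) => Matrix.vecMul φ (C * A ^ (k : ℕ)) j) :=
  stmt11_general A Q lam hQ hA hlam C hC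
end
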